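/- arXiv:2201.03360 — 2 statements merged into one kernel-verified Lean document; each statement's English description precedes it below -/
import Mathlib

section
/- The nonlinear Spencer operator 𝒟 satisfies the cocycle property 𝒟(σ'∘σ) = 𝒟σ + σ_*^{-1}(𝒟σ') for all σ, σ' ∈ 𝒢_∞; in particular 𝒟σ^{-1} = −σ_*(𝒟σ). Moreover, for u ∈ ∧T^* ⊗ J^∞𝔤, D(σ_*^{-1}u) = σ_*^{-1}(Du) + [𝒟σ, σ_*^{-1}u]. -/
/-- The nonlinear Spencer operator 𝒟σ = χ − σ_*^{-1}(χ) satisfies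
the cocycle property 𝒟(σ'∘σ) = 𝒟σ + σ_*^{-1}(𝒟σ'), in particular
𝒟σ^{-1} = −σ_*(𝒟σ); moreover for u ∈ ∧𝒯^* ⊗ 𝒥^∞𝔤,
D(σ_*^{-1}u) = σ_*^{-1}(Du) + [𝒟σ, σ_*^{-1}u].

`W` = ∧(J̌^∞𝔤)^* ⊗ J̌^∞𝔤 with the Nijenhuis bracket `br`; `χ` the fundamental
form; `Gp` = 𝒢_∞ acting by automorphisms of the Lie algebra sheaf via
ρ : σ ↦ σ_* (so ρ(σ'∘σ) = ρσ' ∘ ρσ and ρσ[u,v] = [ρσ u, ρσ v]); Du = [χ, u];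
`S` is the subsheaf ∧𝒯^* ⊗ 𝒥^∞𝔤. -/
theorem nonlinear_spencer_cocycle
    (W : Type*) [AddCommGroup W] [Module ℝ W]
    (br : W →ₗ[ℝ] W →ₗ[ℝ] W) (χ : W)
    (Gp : Type*) [Group Gp]
    (ρ : Gp →* (W ≃ₗ[ℝ] W))
    (hauto : ∀ (σ : Gp) (u v : W), (ρ σ) (br u v) = br ((ρ σ) u) ((ρ σ) v))
    (S : Submodule ℝ W) :
    (∀ σ' σ : Gp,
        χ - (ρ (σ' * σ)).symm χ
          = (χ - (ρ σ).symm χ) + (ρ σ).symm (χ - (ρ σ').symm χ)) ∧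
    (∀ σ : Gp, χ - (ρ σ⁻¹).symm χ = -((ρ σ) (χ - (ρ σ).symm χ))) ∧
    (∀ (σ : Gp), ∀ u ∈ S,
        br χ ((ρ σ).symm u)
          = (ρ σ).symm (br χ u) + br (χ - (ρ σ).symm χ) ((ρ σ).symm u)) := by
  have hsymm : ∀ σ : Gp, (ρ σ).symm = ρ σ⁻¹ := by
    intro σ; rw [map_inv]; rfl
  have hcomp : ∀ (σ τ : Gp) (w : W), (ρ (σ * τ)) w = (ρ σ) ((ρ τ) w) := by
    intro σ τ w; rw [map_mul]; rfl
  refine ⟨?_, ?_, ?_⟩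
  · intro σ' σ
    simp only [hsymm, mul_inv_rev, hcomp, map_sub]
    abel
  · intro σ
    simp only [hsymm, map_sub]
    have h1 : (ρ σ) ((ρ σ⁻¹) χ) = χ := by
      rw [← hcomp, mul_inv_cancel, map_one]; rfl
    have h2 : (ρ σ⁻¹⁻¹) χ = (ρ σ) χ := by rw [inv_inv]
    rw [h1, h2]; abel
  · intro σ u _
    simp only [hsymm, map_sub, LinearMap.sub_apply]
    rw [hauto σ⁻¹ χ u]
    abel
end

section
/- Every σ ∈ 𝒢_∞ satisfies the nonlinear structure equation D(𝒟σ) − ½[𝒟σ, 𝒟σ] = 0; i.e., with 𝒟₁u = Du − ½[u,u], one has 𝒟₁∘𝒟 = 0, so the first nonlinear Spencer complex 1 → 𝒢 → 𝒢_{k+1} → T^*⊗J^k𝔤 → ∧²T^*⊗J^{k−1}𝔤 is a complex. -/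
/-- Every σ ∈ 𝒢_∞ satisfies the nonlinear structure equation
D(𝒟σ) − ½[𝒟σ, 𝒟σ] = 0; i.e. with 𝒟₁u = Du − ½[u,u] one has 𝒟₁∘𝒟 = 0, so the
first nonlinear Spencer complex 1 → 𝒢 → 𝒢_{k+1} → 𝒯^*⊗𝒥^k𝔤 → ∧²𝒯^*⊗𝒥^{k−1}𝔤
is a complex.

`W` = ∧(J̌^∞𝔤)^* ⊗ J̌^∞𝔤 with the Nijenhuis bracket `br`; `W1` the degree-1
part, on which the bracket is symmetric (odd degrees); χ ∈ W1 is the fundamental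
form with [χ,χ] = 0; 𝒢_∞ = `Gp` acts by automorphisms ρσ = σ_* preserving W1;
𝒟σ = χ − σ_*^{-1}χ, Du = [χ,u], 𝒟₁u = Du − ½[u,u]. -/
theorem nonlinear_structure_equation
    (W : Type*) [AddCommGroup W] [Module ℝ W]
    (br : W →ₗ[ℝ] W →ₗ[ℝ] W)
    (W1 : Submodule ℝ W)
    (hsym : ∀ u ∈ W1, ∀ v ∈ W1, br u v = br v u)
    (χ : W) (hχ1 : χ ∈ W1) (hχχ : br χ χ = 0)
    (Gp : Type*) [Group Gp]
    (ρ : Gp →* (W ≃ₗ[ℝ] W))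
    (hauto : ∀ (σ : Gp) (u v : W), (ρ σ) (br u v) = br ((ρ σ) u) ((ρ σ) v))
    (hW1 : ∀ (σ : Gp), ∀ u ∈ W1, (ρ σ) u ∈ W1) :
    ∀ σ : Gp,
      br χ (χ - (ρ σ).symm χ)
        - (1 / 2 : ℝ) • br (χ - (ρ σ).symm χ) (χ - (ρ σ).symm χ) = 0 := by
  intro σ
  set ψ := (ρ σ).symm χ with hψ
  -- ψ = ρ σ⁻¹ χ
  have hinv : (ρ σ).symm = (ρ σ⁻¹ : W ≃ₗ[ℝ] W) := by
    have : ρ σ⁻¹ = (ρ σ)⁻¹ := map_inv ρ σ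
    rw [this]; rfl
  have hψ1 : ψ ∈ W1 := by
    rw [hψ, hinv]; exact hW1 σ⁻¹ χ hχ1
  have hψψ : br ψ ψ = 0 := by
    have h1 : (ρ σ) (br ψ ψ) = br ((ρ σ) ψ) ((ρ σ) ψ) := hauto σ ψ ψ
    have h2 : (ρ σ) ψ = χ := by rw [hψ]; exact (ρ σ).apply_symm_apply χ
    rw [h2, hχχ] at h1
    have := congrArg (ρ σ).symm h1
    simpa using this
  have hcomm : br ψ χ = br χ ψ := hsym ψ hψ1 χ hχ1
  have hexp : br (χ - ψ) (χ - ψ) = br χ χ - br χ ψ - br ψ χ + br ψ ψ := by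
    simp [map_sub, LinearMap.sub_apply]; abel
  rw [map_sub, hexp, hχχ, hψψ, hcomm]
  module
end
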